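/- For A, B positive semidefinite symmetric m×m real matrices, the Frobenius norm of A^{1/2} − B^{1/2} satisfies |A^{1/2} − B^{1/2}|_F² ≤ |A − B|_*, where |·|_* denotes the nuclear (trace) norm. (Powers–Størmer inequality.) -/

import Mathlib

/-!
Write `P = A^{1/2}`, `Q = B^{1/2}` and `D = P - Q`. If `x` is a unit eigenvector of `D` with
eigenvalue `μ`, then `⟪x, (A - B) x⟫ = ‖P x‖² - ‖Q x‖² = ⟪D x, (P + Q) x⟫ = μ ⟪x, (P + Q) x⟫`,
while `|μ| = |⟪x, P x⟫ - ⟪x, Q x⟫| ≤ ⟪x, (P + Q) x⟫` by positivity of `P` and `Q`; hence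
`μ² ≤ |⟪x, (A - B) x⟫|`. Summing over an orthonormal eigenbasis of `D` gives `‖D‖_F²` on the
left, and for every orthonormal basis `(vᵢ)` the sum `∑ᵢ |⟪vᵢ, M vᵢ⟫|` is at most `‖M‖_*`,
as one sees by expanding each `vᵢ` in an eigenbasis of `M`.
-/

open Matrix

noncomputable def frob {m : ℕ} (M : Matrix (Fin m) (Fin m) ℝ) : ℝ :=
  Real.sqrt (∑ i, ∑ j, (M i j) ^ 2)

/-- Nuclear norm of a Hermitian (real symmetric) matrix: sum of absolute
values of its eigenvalues. -/
noncomputable def nuclear {m : ℕ} (M : Matrix (Fin m) (Fin m) ℝ)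
    (hM : M.IsHermitian) : ℝ :=
  ∑ i, |hM.eigenvalues i|

open scoped ComplexOrder in
/-- The square root of a positive semidefinite matrix, as defined in the older Mathlib
(`Matrix.PosSemidef.sqrt`, since removed). -/
noncomputable def Matrix.PosSemidef.sqrt {n : Type*} [Fintype n] [DecidableEq n] {𝕜 : Type*}
    [RCLike 𝕜] {A : Matrix n n 𝕜} (hA : A.PosSemidef) : Matrix n n 𝕜 :=
  hA.1.eigenvectorUnitary.1 * diagonal ((↑) ∘ Real.sqrt ∘ hA.1.eigenvalues) *
    (star hA.1.eigenvectorUnitary : Matrix n n 𝕜)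

namespace Matrix

open scoped ComplexOrder MatrixOrder RealInnerProductSpace

variable {n : Type*} [Fintype n]

section RCLike

variable [DecidableEq n] {𝕜 : Type*} [RCLike 𝕜]

lemma PosSemidef.sqrt_eq_cfcSqrt {A : Matrix n n 𝕜} (hA : A.PosSemidef) :
    hA.sqrt = CFC.sqrt A := by
  rw [CFC.sqrt_eq_cfc, cfc_nnreal_eq_real _ A hA.nonneg, hA.1.cfc_eq, IsHermitian.cfc,
    Unitary.conjStarAlgAut_apply, PosSemidef.sqrt]
  unfold Real.sqrt
  rfl

lemma PosSemidef.posSemidef_sqrt {A : Matrix n n 𝕜} (hA : A.PosSemidef) :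
    hA.sqrt.PosSemidef := by
  rw [hA.sqrt_eq_cfcSqrt]
  exact (CFC.sqrt_nonneg A).posSemidef

lemma PosSemidef.sqrt_mul_self {A : Matrix n n 𝕜} (hA : A.PosSemidef) :
    hA.sqrt * hA.sqrt = A := by
  rw [hA.sqrt_eq_cfcSqrt]
  exact CFC.sqrt_mul_sqrt_self A hA.nonneg

lemma IsHermitian.trace_mul_self {M : Matrix n n 𝕜} (hM : M.IsHermitian) :
    (M * M).trace = ∑ i, (hM.eigenvalues i : 𝕜) ^ 2 := by
  set U : Matrix n n 𝕜 := ↑hM.eigenvectorUnitary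
  set D : Matrix n n 𝕜 := diagonal (RCLike.ofReal ∘ hM.eigenvalues)
  have hM_eq : M = U * D * star U := hM.spectral_theorem
  calc (M * M).trace = (star U * U * (D * (star U * U) * D)).trace := by
        rw [hM_eq, ← trace_mul_cycle]; simp only [mul_assoc]
    _ = ∑ i, (hM.eigenvalues i : 𝕜) ^ 2 := by
        rw [Unitary.coe_star_mul_self, one_mul, mul_one, diagonal_mul_diagonal, trace_diagonal]
        simp [sq]

end RCLike

section Real

variable {M P Q : Matrix n n ℝ}

lemma IsHermitian.dotProduct_mulVec_comm (hM : M.IsHermitian) (x y : n → ℝ) :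
    x ⬝ᵥ (M *ᵥ y) = (M *ᵥ x) ⬝ᵥ y := by
  rw [dotProduct_mulVec, ← mulVec_transpose, (isHermitian_iff_isSymm.mp hM).eq]

lemma IsHermitian.dotProduct_mul_self_mulVec (hM : M.IsHermitian) (x : n → ℝ) :
    x ⬝ᵥ ((M * M) *ᵥ x) = (M *ᵥ x) ⬝ᵥ (M *ᵥ x) := by
  rw [← mulVec_mulVec, hM.dotProduct_mulVec_comm]

lemma sq_le_abs_dotProduct_mul_self_sub_mul_self_mulVec (hP : P.PosSemidef) (hQ : Q.PosSemidef)
    {x : n → ℝ} (hx : x ⬝ᵥ x = 1) {μ : ℝ} (hμ : (P - Q) *ᵥ x = μ • x) :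
    μ ^ 2 ≤ |x ⬝ᵥ ((P * P - Q * Q) *ᵥ x)| := by
  set s := x ⬝ᵥ (P *ᵥ x) + x ⬝ᵥ (Q *ᵥ x)
  have hPx : 0 ≤ x ⬝ᵥ (P *ᵥ x) := by simpa using hP.dotProduct_mulVec_nonneg x
  have hQx : 0 ≤ x ⬝ᵥ (Q *ᵥ x) := by simpa using hQ.dotProduct_mulVec_nonneg x
  have hμ' : P *ᵥ x - Q *ᵥ x = μ • x := by rw [← sub_mulVec, hμ]
  have hμ_eq : μ = x ⬝ᵥ (P *ᵥ x) - x ⬝ᵥ (Q *ᵥ x) := by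
    rw [← dotProduct_sub, hμ', dotProduct_smul, hx, smul_eq_mul, mul_one]
  have habs : |μ| ≤ s := abs_le.mpr ⟨by linarith, by linarith⟩
  have hquad : x ⬝ᵥ ((P * P - Q * Q) *ᵥ x) = μ * s := by
    rw [sub_mulVec, dotProduct_sub, hP.1.dotProduct_mul_self_mulVec,
      hQ.1.dotProduct_mul_self_mulVec]
    calc (P *ᵥ x) ⬝ᵥ (P *ᵥ x) - (Q *ᵥ x) ⬝ᵥ (Q *ᵥ x)
        = (P *ᵥ x - Q *ᵥ x) ⬝ᵥ (P *ᵥ x + Q *ᵥ x) := by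
          simp only [sub_dotProduct, dotProduct_add, dotProduct_comm (Q *ᵥ x) (P *ᵥ x)]; ring
      _ = μ * s := by rw [hμ', smul_dotProduct, dotProduct_add, smul_eq_mul]
  calc μ ^ 2 = |μ| * |μ| := by rw [abs_mul_abs_self, sq]
    _ ≤ |μ| * s := mul_le_mul_of_nonneg_left habs (abs_nonneg μ)
    _ = |x ⬝ᵥ ((P * P - Q * Q) *ᵥ x)| := by
      rw [hquad, abs_mul, abs_of_nonneg ((abs_nonneg μ).trans habs)]

lemma _root_.EuclideanSpace.real_inner_eq_dotProduct (x y : EuclideanSpace ℝ n) :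
    ⟪x, y⟫ = ⇑x ⬝ᵥ ⇑y := by
  rw [EuclideanSpace.inner_eq_star_dotProduct, star_trivial, dotProduct_comm]

variable [DecidableEq n]

lemma IsHermitian.sum_sq_entries_eq_sum_sq_eigenvalues (hM : M.IsHermitian) :
    ∑ i, ∑ j, M i j ^ 2 = ∑ i, hM.eigenvalues i ^ 2 :=
  calc ∑ i, ∑ j, M i j ^ 2 = (M * Mᵀ).trace := by
        simp only [trace, diag, mul_apply, transpose_apply, sq]
    _ = ∑ i, hM.eigenvalues i ^ 2 := by
      rw [(isHermitian_iff_isSymm.mp hM).eq, hM.trace_mul_self]; rfl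

lemma IsHermitian.dotProduct_mulVec_eq_sum (hM : M.IsHermitian) (x : EuclideanSpace ℝ n) :
    ⇑x ⬝ᵥ (M *ᵥ ⇑x) = ∑ j, hM.eigenvalues j * ⟪hM.eigenvectorBasis j, x⟫ ^ 2 := by
  have hMx : M *ᵥ ⇑x = ∑ j, (⟪hM.eigenvectorBasis j, x⟫ * hM.eigenvalues j) •
      ⇑(hM.eigenvectorBasis j) := by
    conv_lhs => rw [← hM.eigenvectorBasis.sum_repr' x]
    simp [mulVec_sum, mulVec_smul, hM.mulVec_eigenvectorBasis, smul_smul]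
  rw [hMx, dotProduct_sum]
  refine Finset.sum_congr rfl fun j _ => ?_
  rw [dotProduct_smul, smul_eq_mul, dotProduct_comm, ← EuclideanSpace.real_inner_eq_dotProduct]
  ring

lemma IsHermitian.sum_abs_dotProduct_mulVec_le (hM : M.IsHermitian)
    (v : OrthonormalBasis n ℝ (EuclideanSpace ℝ n)) :
    ∑ i, |⇑(v i) ⬝ᵥ (M *ᵥ ⇑(v i))| ≤ ∑ j, |hM.eigenvalues j| :=
  calc ∑ i, |⇑(v i) ⬝ᵥ (M *ᵥ ⇑(v i))|
      ≤ ∑ i, ∑ j, |hM.eigenvalues j| * ⟪hM.eigenvectorBasis j, v i⟫ ^ 2 := by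
        refine Finset.sum_le_sum fun i _ => ?_
        rw [hM.dotProduct_mulVec_eq_sum]
        exact (Finset.abs_sum_le_sum_abs _ _).trans_eq (by simp [abs_mul])
    _ = ∑ j, |hM.eigenvalues j| * ∑ i, ⟪hM.eigenvectorBasis j, v i⟫ ^ 2 := by
        rw [Finset.sum_comm]; simp only [Finset.mul_sum]
    _ = ∑ j, |hM.eigenvalues j| := by
        simp [v.sum_sq_inner_left, hM.eigenvectorBasis.norm_eq_one]

end Real

end Matrix

lemma frob_sq {m : ℕ} (M : Matrix (Fin m) (Fin m) ℝ) : frob M ^ 2 = ∑ i, ∑ j, M i j ^ 2 :=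
  Real.sq_sqrt (by positivity)

/-- Powers–Størmer inequality. -/
theorem powers_stormer {m : ℕ} (A B : Matrix (Fin m) (Fin m) ℝ)
    (hA : A.PosSemidef) (hB : B.PosSemidef) (hAB : (A - B).IsHermitian) :
    frob (hA.sqrt - hB.sqrt) ^ 2 ≤ nuclear (A - B) hAB := by
  have hP := hA.posSemidef_sqrt
  have hQ := hB.posSemidef_sqrt
  have hD : (hA.sqrt - hB.sqrt).IsHermitian := hP.1.sub hQ.1
  set u := hD.eigenvectorBasis
  have hu (i : Fin m) : ⇑(u i) ⬝ᵥ ⇑(u i) = 1 := by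
    rw [← EuclideanSpace.real_inner_eq_dotProduct, real_inner_self_eq_norm_sq, u.norm_eq_one,
      one_pow]
  rw [frob_sq, hD.sum_sq_entries_eq_sum_sq_eigenvalues, nuclear]
  calc ∑ i, hD.eigenvalues i ^ 2 ≤ ∑ i, |⇑(u i) ⬝ᵥ ((A - B) *ᵥ ⇑(u i))| :=
        Finset.sum_le_sum fun i _ => by
          simpa only [hA.sqrt_mul_self, hB.sqrt_mul_self] using
            sq_le_abs_dotProduct_mul_self_sub_mul_self_mulVec hP hQ (hu i)
              (hD.mulVec_eigenvectorBasis i)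
    _ ≤ ∑ i, |hAB.eigenvalues i| := hAB.sum_abs_dotProduct_mulVec_le u
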